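/- Let $N \ge 2$ and let $a_1, \dots, a_N$ be integers with $a_j \ge 2$ for all $j$. Let $P(x_1,\dots,x_N) = x_1^{a_1}x_2 + \cdots + x_{N-1}^{a_{N-1}}x_N + x_N^{a_N}x_1$ be the loop polynomial over $\mathbb{C}$. If $x \in \mathbb{C}^N$ is a point at which all partial derivatives of $P$ vanish, then $x = 0$. -/

import Mathlib

/-! Write `σ` for the successor permutation of the loop. The partial derivative of `P` in `x_i` is
`a_i x_i^(a_i-1) x_(σ i) + x_(σ⁻¹ i)^(a_(σ⁻¹ i))`, so `x_(σ i) = 0` forces `x_i = 0`: the finite set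
`T` of nonzero coordinates is mapped into itself by `σ`, hence permuted by it. Multiplying the
equation at `σ j` by `x_(σ j)` gives `M_j = -a_(σ j) M_(σ j)` for the monomials
`M_j = x_j^(a_j) x_(σ j)`, which do not vanish on `T`. Taking the product over `T` yields
`∏_(j ∈ T) a_(σ j) = 1`, impossible for nonempty `T` since every `a_j ≥ 2`. -/

open Finset Function

theorem sum_range_pow_mul_add_eq_sum_finRotate (n : ℕ) (a : ℕ → ℕ) (u : ℕ → ℂ) :
    ∑ j ∈ range n, u j ^ a j * u (j + 1) + u n ^ a n * u 0
      = ∑ j : Fin (n + 1), u j ^ a j * u (finRotate (n + 1) j) := by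
  simp [Fin.sum_univ_castSucc, Fin.sum_univ_eq_sum_range (fun j => u j ^ a j * u (j + 1))]

noncomputable def loopPoly {ι : Type*} [Fintype ι] (σ : Equiv.Perm ι) (a : ι → ℕ) (y : ι → ℂ) :
    ℂ :=
  ∑ k, y k ^ a k * y (σ k)

theorem hasDerivAt_update_pow_mul_update {ι : Type*} [DecidableEq ι] (y : ι → ℂ) (i p q : ι)
    (k : ℕ) (hpq : p ≠ q) :
    HasDerivAt (fun t => update y i t p ^ k * update y i t q)
      ((if p = i then k * y i ^ (k - 1) * y q else 0) + (if q = i then y p ^ k else 0)) (y i) := by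
  rcases eq_or_ne p i with rfl | hp
  · simpa [hpq.symm] using (hasDerivAt_pow k (y p)).mul_const (y q)
  rcases eq_or_ne q i with rfl | hq
  · simpa [hp] using (hasDerivAt_id (y q)).const_mul (y p ^ k)
  · simpa [hp, hq] using hasDerivAt_const (y i) (y p ^ k * y q)

theorem hasDerivAt_loopPoly_update {ι : Type*} [Fintype ι] [DecidableEq ι] (σ : Equiv.Perm ι)
    (hσ : ∀ k, σ k ≠ k) (a : ι → ℕ) (y : ι → ℂ) (i : ι) :
    HasDerivAt (fun t => loopPoly σ a (update y i t))
      (a i * y i ^ (a i - 1) * y (σ i) + y (σ.symm i) ^ a (σ.symm i)) (y i) := by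
  have := HasDerivAt.fun_sum (u := univ) fun k _ =>
    hasDerivAt_update_pow_mul_update y i k (σ k) (a k) (hσ k).symm
  unfold loopPoly
  simpa only [sum_add_distrib, ← Equiv.eq_symm_apply, sum_ite_eq', mem_univ, if_true]
    using this

def IsLoopCritical {ι : Type*} (σ : Equiv.Perm ι) (a : ι → ℕ) (y : ι → ℂ) : Prop :=
  ∀ i, a i * y i ^ (a i - 1) * y (σ i) + y (σ.symm i) ^ a (σ.symm i) = 0

theorem Finset.prod_comp_perm_of_mapsTo {α β : Type*} [CommMonoid β] {s : Finset α}
    (σ : Equiv.Perm α) (hs : Set.MapsTo σ s s) (f : α → β) : ∏ x ∈ s, f (σ x) = ∏ x ∈ s, f x := by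
  have hmap : s.map σ.toEmbedding = s :=
    eq_of_subset_of_card_le (fun x hx => by
      obtain ⟨y, hy, rfl⟩ := mem_map.mp hx; exact hs hy) (card_map _).ge
  conv_rhs => rw [← hmap, prod_map]
  rfl

namespace IsLoopCritical
variable {ι : Type*} {σ : Equiv.Perm ι} {a : ι → ℕ} {y : ι → ℂ}

theorem apply_perm_ne_zero (h : IsLoopCritical σ a y) (ha : ∀ i, 2 ≤ a i) {i : ι}
    (hi : y i ≠ 0) : y (σ i) ≠ 0 := by
  intro h0
  have h' := h (σ i)
  rw [h0, zero_pow (by have := ha (σ i); omega), σ.symm_apply_apply] at h'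
  simp only [mul_zero, zero_mul, zero_add] at h'
  exact hi (pow_eq_zero_iff (by have := ha i; omega) |>.mp h')

theorem pow_mul_apply_eq_neg_mul (h : IsLoopCritical σ a y) (ha : ∀ i, 1 ≤ a i) (j : ι) :
    y j ^ a j * y (σ j) = -(a (σ j) : ℂ) * (y (σ j) ^ a (σ j) * y (σ (σ j))) := by
  have h' := h (σ j)
  rw [σ.symm_apply_apply] at h'
  have hpow := pow_sub_one_mul (by have := ha (σ j); omega : a (σ j) ≠ 0) (y (σ j))
  linear_combination y (σ j) * h' - (a (σ j) : ℂ) * y (σ (σ j)) * hpow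

theorem eq_zero [Fintype ι] (h : IsLoopCritical σ a y) (ha : ∀ i, 2 ≤ a i) : y = 0 := by
  classical
  by_contra hne
  set T := univ.filter (y · ≠ 0)
  obtain ⟨j₀, hj₀⟩ : T.Nonempty := by
    obtain ⟨j, hj⟩ := Function.ne_iff.mp hne
    exact ⟨j, mem_filter.mpr ⟨mem_univ j, hj⟩⟩
  have hT : Set.MapsTo σ T T := fun j hj =>
    mem_filter.mpr ⟨mem_univ _, h.apply_perm_ne_zero ha (mem_filter.mp hj).2⟩
  set M : ι → ℂ := fun j => y j ^ a j * y (σ j)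
  have hM : ∏ j ∈ T, M j ≠ 0 := prod_ne_zero_iff.mpr fun j hj => by
    have hj' := (mem_filter.mp hj).2
    exact mul_ne_zero (pow_ne_zero _ hj') (h.apply_perm_ne_zero ha hj')
  have hprod : (∏ j ∈ T, -(a (σ j) : ℂ)) * ∏ j ∈ T, M j = ∏ j ∈ T, M j :=
    calc (∏ j ∈ T, -(a (σ j) : ℂ)) * ∏ j ∈ T, M j
        = (∏ j ∈ T, -(a (σ j) : ℂ)) * ∏ j ∈ T, M (σ j) := by rw [prod_comp_perm_of_mapsTo σ hT]
      _ = ∏ j ∈ T, M j := by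
        have ha₁ (i : ι) : 1 ≤ a i := (ha i).trans' one_le_two
        rw [← prod_mul_distrib]
        exact prod_congr rfl fun j _ => (h.pow_mul_apply_eq_neg_mul ha₁ j).symm
  have hone : ∏ j ∈ T, a (σ j) = 1 := by
    have := congrArg norm ((mul_eq_right₀ hM).mp hprod)
    exact_mod_cast (by simpa [norm_prod] using this : ∏ j ∈ T, (a (σ j) : ℝ) = 1)
  have := (prod_eq_one_iff_of_one_le' fun j _ => by have := ha (σ j); omega).mp hone j₀ hj₀
  have := ha (σ j₀)
  omega

end IsLoopCritical

/-- The loop polynomial `P = ∑_{j<N-1} x_j^{a_j} x_{j+1} + x_{N-1}^{a_{N-1}} x_0`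
(with all `a_j ≥ 2`) has an isolated singularity at the origin: if all partial
derivatives of `P` vanish at `x`, then `x = 0`. (Indices are 0-based.) -/
theorem loop_isolated_singularity (N : ℕ) (hN : 2 ≤ N) (a : ℕ → ℕ)
    (ha : ∀ j < N, 2 ≤ a j) (x : ℕ → ℂ)
    (hcrit : ∀ i < N,
      deriv (fun t : ℂ =>
        (∑ j ∈ Finset.range (N - 1),
            (Function.update x i t) j ^ a j * (Function.update x i t) (j + 1))
          + (Function.update x i t) (N - 1) ^ a (N - 1)
            * (Function.update x i t) 0) (x i) = 0) :
    ∀ j < N, x j = 0 := by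
  obtain ⟨n, rfl⟩ : ∃ n, N = n + 1 + 1 := ⟨N - 2, by omega⟩
  have hσ (k : Fin (n + 1 + 1)) : finRotate (n + 1 + 1) k ≠ k :=
    Equiv.Perm.mem_support.mp (support_finRotate ▸ mem_univ k)
  have hloop : IsLoopCritical (finRotate (n + 1 + 1)) (fun k => a k) (fun k => x k) := fun i => by
    have h := hcrit i i.isLt
    simp only [Nat.add_sub_cancel, sum_range_pow_mul_add_eq_sum_finRotate,
      update_apply_of_injective x Fin.val_injective] at h
    have hd := (hasDerivAt_loopPoly_update _ hσ (fun k => a k) (fun k => x k) i).deriv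
    unfold loopPoly at hd
    rwa [hd] at h
  intro j hj
  exact congrFun (hloop.eq_zero fun k => ha k k.isLt) ⟨j, hj⟩
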